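/- arXiv:math/0606590 — 3 statements merged into one kernel-verified Lean document; each statement's English description precedes it below -/
import Mathlib

section
/- If f : ℝ → ℝ is convex on [m, M], x₁, ..., xₙ are self-adjoint n×n complex matrices with spectra in [m, M], and φ₁, ..., φₙ are positive linear maps on matrices with ∑ᵢ φᵢ(1) = 1, then ∑ᵢ φᵢ(f(xᵢ)) ≤ α_f · ∑ᵢ φᵢ(xᵢ) + β_f · 1, where α_f = (f(M) − f(m))/(M − m) and β_f = (M f(m) − m f(M))/(M − m), and f is applied via the functional calculus. -/
/-!
Convexity puts `f` below its chord `t ↦ α_f t + β_f` on `[m, M]`. Monotonicity of the continuous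
functional calculus lifts this to `f(x) ≤ α_f x + β_f 1` for every self-adjoint `x` with spectrum in
`[m, M]`; positive linear maps are monotone, so applying the `φᵢ`, summing, and using
`∑ φᵢ(1) = 1` gives the inequality.
-/

open Matrix
open scoped ComplexOrder Classical

/-- Functional calculus for (Hermitian) matrices via the spectral theorem. -/
noncomputable def fc {n : ℕ} (f : ℝ → ℝ) (A : Matrix (Fin n) (Fin n) ℂ) :
    Matrix (Fin n) (Fin n) ℂ :=
  if h : A.IsHermitian then
    (h.eigenvectorUnitary : Matrix (Fin n) (Fin n) ℂ) *
      Matrix.diagonal (fun i => (f (h.eigenvalues i) : ℂ)) *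
      (star h.eigenvectorUnitary : Matrix (Fin n) (Fin n) ℂ)
  else 0

/-- The Loewner order: `A ≤ B` iff `B - A` is positive semidefinite. -/
def Loewner {n : ℕ} (A B : Matrix (Fin n) (Fin n) ℂ) : Prop := (B - A).PosSemidef

/-- The operator norm of a matrix acting on Euclidean space. -/
noncomputable def opNorm {n : ℕ} (A : Matrix (Fin n) (Fin n) ℂ) : ℝ :=
  ‖Matrix.toEuclideanCLM (𝕜 := ℂ) (n := Fin n) A‖

theorem ConvexOn.le_chord {𝕜 : Type*} [Field 𝕜] [LinearOrder 𝕜] [IsStrictOrderedRing 𝕜]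
    {m M t : 𝕜} (hmM : m < M) {f : 𝕜 → 𝕜} (hf : ConvexOn 𝕜 (Set.Icc m M) f)
    (ht : t ∈ Set.Icc m M) :
    f t ≤ (f M - f m) / (M - m) * t + (M * f m - m * f M) / (M - m) := by
  have hMm : 0 < M - m := sub_pos.2 hmM
  have key := hf.2 (Set.left_mem_Icc.2 hmM.le) (Set.right_mem_Icc.2 hmM.le)
    (div_nonneg (sub_nonneg.2 ht.2) hMm.le) (div_nonneg (sub_nonneg.2 ht.1) hMm.le)
    (by field : (M - t) / (M - m) + (t - m) / (M - m) = 1)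
  simp only [smul_eq_mul] at key
  calc f t = f ((M - t) / (M - m) * m + (t - m) / (M - m) * M) := by congr 1; field
    _ ≤ _ := key
    _ = _ := by field

section ContinuousFunctionalCalculus

variable {A B : Type*} [Ring A] [StarRing A] [Algebra ℝ A] [PartialOrder A] [StarOrderedRing A]
  [TopologicalSpace A] [ContinuousFunctionalCalculus ℝ A IsSelfAdjoint]

-- A convex `f` may jump at `m` or `M`; without `hfc`, `cfc f a` could be the junk value `0`.
theorem cfc_le_chord {m M : ℝ} (hmM : m < M) {f : ℝ → ℝ} (hf : ConvexOn ℝ (Set.Icc m M) f)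
    {a : A} (ha : IsSelfAdjoint a) (hspec : spectrum ℝ a ⊆ Set.Icc m M)
    (hfc : ContinuousOn f (spectrum ℝ a)) :
    cfc f a ≤ ((f M - f m) / (M - m)) • a + ((M * f m - m * f M) / (M - m)) • 1 := calc
  cfc f a ≤ cfc (fun t => (f M - f m) / (M - m) * t + (M * f m - m * f M) / (M - m)) a :=
    cfc_mono fun t ht => hf.le_chord hmM (hspec ht)
  _ = _ := by
    rw [cfc_add_const _ _ a, cfc_const_mul_id _ a, Algebra.algebraMap_eq_smul_one]

variable [AddCommGroup B] [PartialOrder B] [IsOrderedAddMonoid B] [Module ℝ B] [One B]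

theorem sum_map_cfc_le_chord {ι : Type*} (s : Finset ι) {m M : ℝ} (hmM : m < M) {f : ℝ → ℝ}
    (hf : ConvexOn ℝ (Set.Icc m M) f) (φ : ι → A →ₚ[ℝ] B) (hφ : ∑ i ∈ s, φ i 1 = 1)
    {a : ι → A} (ha : ∀ i, IsSelfAdjoint (a i)) (hspec : ∀ i, spectrum ℝ (a i) ⊆ Set.Icc m M)
    (hfc : ∀ i, ContinuousOn f (spectrum ℝ (a i))) :
    ∑ i ∈ s, φ i (cfc f (a i)) ≤
      ((f M - f m) / (M - m)) • ∑ i ∈ s, φ i (a i) + ((M * f m - m * f M) / (M - m)) • 1 := calc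
  ∑ i ∈ s, φ i (cfc f (a i))
      ≤ ∑ i ∈ s, φ i (((f M - f m) / (M - m)) • a i + ((M * f m - m * f M) / (M - m)) • 1) :=
    Finset.sum_le_sum fun i _ =>
      OrderHomClass.mono (φ i) (cfc_le_chord hmM hf (ha i) (hspec i) (hfc i))
  _ = _ := by
    simp only [map_add, map_smul, Finset.sum_add_distrib, ← Finset.smul_sum, hφ]

end ContinuousFunctionalCalculus

theorem fc_eq_cfc {n : ℕ} (f : ℝ → ℝ) {A : Matrix (Fin n) (Fin n) ℂ} (hA : A.IsHermitian) :
    fc f A = cfc f A := by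
  rw [hA.cfc_eq, fc, dif_pos hA, IsHermitian.cfc, Unitary.conjStarAlgAut_apply]
  rfl

open scoped MatrixOrder in
theorem stmt_0 {n N : ℕ} (m M : ℝ) (hmM : m < M) (f : ℝ → ℝ)
    (hf : ConvexOn ℝ (Set.Icc m M) f)
    (x : Fin N → Matrix (Fin n) (Fin n) ℂ) (hx : ∀ i, (x i).IsHermitian)
    (hspec : ∀ i j, (hx i).eigenvalues j ∈ Set.Icc m M)
    (φ : Fin N → (Matrix (Fin n) (Fin n) ℂ →ₗ[ℂ] Matrix (Fin n) (Fin n) ℂ))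
    (hφ : ∀ i A, A.PosSemidef → (φ i A).PosSemidef)
    (hunital : ∑ i, φ i 1 = 1) :
    Loewner (∑ i, φ i (fc f (x i)))
      (((f M - f m) / (M - m) : ℝ) • ∑ i, φ i (x i) +
        ((M * f m - m * f M) / (M - m) : ℝ) • (1 : Matrix (Fin n) (Fin n) ℂ)) := by
  let ψ i : Matrix (Fin n) (Fin n) ℂ →ₚ[ℝ] Matrix (Fin n) (Fin n) ℂ :=
    .mk₀ ((φ i).restrictScalars ℝ) fun A hA => (hφ i A (nonneg_iff_posSemidef.1 hA)).nonneg
  have hspec' i : spectrum ℝ (x i) ⊆ Set.Icc m M := by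
    rw [(hx i).spectrum_real_eq_range_eigenvalues]
    exact Set.range_subset_iff.2 (hspec i)
  have hfc : ∑ i, φ i (fc f (x i)) = ∑ i, φ i (cfc f (x i)) :=
    Finset.sum_congr rfl fun i _ => by rw [fc_eq_cfc f (hx i)]
  rw [Loewner, ← le_iff, hfc]
  exact sum_map_cfc_le_chord Finset.univ hmM hf ψ hunital (fun i => (hx i).isSelfAdjoint) hspec'
    fun i => (x i).finite_real_spectrum.continuousOn _
end

section
/- Let f : ℝ → ℝ be convex on [m, M] with subdifferential function k (i.e., k(t) ∈ [f'₋(t), f'₊(t)] for t ∈ (m,M), k(m) = f'₊(m), k(M) = f'₋(M)). If x is a self-adjoint n×n complex matrix with spectrum in [m, M] and φ is a unital positive linear map on matrices, then for every y ∈ [m, M]: f(y)·1 + k(y)·(φ(x) − y·1) ≤ φ(f(x)). -/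
open Matrix
open scoped ComplexOrder Classical

/-!
Every eigenvalue `t` of `x` lies in `[m, M]`, so the supporting-line inequality
`f y + k y * (t - y) ≤ f t` holds on the spectrum; diagonalising `x` turns it into the matrix
inequality `f y • 1 + k y • (x - y • 1) ≤ f(x)`. A positive linear map is monotone for the
Loewner order, and unitality lets it pass through the affine left-hand side.
-/

theorem Loewner.map {n : ℕ} {F : Type*}
    [FunLike F (Matrix (Fin n) (Fin n) ℂ) (Matrix (Fin n) (Fin n) ℂ)]
    [AddMonoidHomClass F (Matrix (Fin n) (Fin n) ℂ) (Matrix (Fin n) (Fin n) ℂ)] {φ : F}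
    (hφ : ∀ A, A.PosSemidef → (φ A).PosSemidef) {A B : Matrix (Fin n) (Fin n) ℂ}
    (h : Loewner A B) : Loewner (φ A) (φ B) := by
  unfold Loewner
  rw [← map_sub]
  exact hφ _ h

namespace Matrix.IsHermitian

open Unitary

variable {n : ℕ} {A : Matrix (Fin n) (Fin n) ℂ}

theorem fc_eq (hA : A.IsHermitian) (g : ℝ → ℝ) :
    fc g A = conjStarAlgAut ℂ _ hA.eigenvectorUnitary
      (diagonal fun i => (g (hA.eigenvalues i) : ℂ)) :=
  dif_pos hA

theorem fc_sub (hA : A.IsHermitian) (g h : ℝ → ℝ) :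
    fc (fun t => g t - h t) A = fc g A - fc h A := by
  simp only [hA.fc_eq, Complex.ofReal_sub, ← diagonal_sub, map_sub]

theorem fc_affine (hA : A.IsHermitian) (a b c : ℝ) :
    fc (fun t => a + b * (t - c)) A = a • (1 : Matrix (Fin n) (Fin n) ℂ) + b • (A - c • 1) := by
  have hdiag : diagonal (fun i => ((a + b * (hA.eigenvalues i - c) : ℝ) : ℂ)) =
      a • (1 : Matrix (Fin n) (Fin n) ℂ) +
        b • (diagonal (RCLike.ofReal ∘ hA.eigenvalues) - c • 1) := by
    ext i j
    rcases eq_or_ne i j with rfl | hij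
    · simp [Complex.real_smul]
    · simp [hij]
  rw [hA.fc_eq, hdiag]
  simp only [← Complex.coe_smul, map_add, map_sub, map_smul, map_one, ← hA.spectral_theorem]

theorem posSemidef_fc (hA : A.IsHermitian) {g : ℝ → ℝ} (hg : ∀ i, 0 ≤ g (hA.eigenvalues i)) :
    (fc g A).PosSemidef := by
  have hD : (diagonal fun i => (g (hA.eigenvalues i) : ℂ)).PosSemidef :=
    posSemidef_diagonal_iff.mpr fun i => Complex.zero_le_real.mpr (hg i)
  rw [hA.fc_eq, conjStarAlgAut_apply, star_eq_conjTranspose]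
  exact hD.mul_mul_conjTranspose_same _

theorem loewner_fc_of_le (hA : A.IsHermitian) {g h : ℝ → ℝ}
    (hgh : ∀ i, g (hA.eigenvalues i) ≤ h (hA.eigenvalues i)) : Loewner (fc g A) (fc h A) := by
  unfold Loewner
  rw [← hA.fc_sub]
  exact hA.posSemidef_fc fun i => sub_nonneg.mpr (hgh i)

end Matrix.IsHermitian

theorem stmt_1_general {n : ℕ} (m M : ℝ) (f k : ℝ → ℝ)
    (hk : ∀ y ∈ Set.Icc m M, ∀ t ∈ Set.Icc m M, f y + k y * (t - y) ≤ f t)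
    (x : Matrix (Fin n) (Fin n) ℂ) (hx : x.IsHermitian)
    (hspec : ∀ j, hx.eigenvalues j ∈ Set.Icc m M)
    (φ : Matrix (Fin n) (Fin n) ℂ →ₗ[ℂ] Matrix (Fin n) (Fin n) ℂ)
    (hφ : ∀ A, A.PosSemidef → (φ A).PosSemidef) (hunital : φ 1 = 1)
    (y : ℝ) (hy : y ∈ Set.Icc m M) :
    Loewner ((f y : ℝ) • (1 : Matrix (Fin n) (Fin n) ℂ) +
        (k y : ℝ) • (φ x - (y : ℝ) • (1 : Matrix (Fin n) (Fin n) ℂ)))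
      (φ (fc f x)) := by
  have hline : Loewner ((f y) • 1 + (k y) • (x - y • 1)) (fc f x) := by
    rw [← hx.fc_affine]
    exact hx.loewner_fc_of_le fun i => hk y hy _ (hspec i)
  have hmapped := hline.map hφ
  rwa [map_add, LinearMap.map_smul_of_tower, LinearMap.map_smul_of_tower, map_sub,
    LinearMap.map_smul_of_tower, hunital] at hmapped

theorem stmt_1 {n : ℕ} (m M : ℝ) (hmM : m < M) (f k : ℝ → ℝ)
    (hf : ConvexOn ℝ (Set.Icc m M) f)
    (hk : ∀ y ∈ Set.Icc m M, ∀ t ∈ Set.Icc m M, f y + k y * (t - y) ≤ f t)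
    (x : Matrix (Fin n) (Fin n) ℂ) (hx : x.IsHermitian)
    (hspec : ∀ j, hx.eigenvalues j ∈ Set.Icc m M)
    (φ : Matrix (Fin n) (Fin n) ℂ →ₗ[ℂ] Matrix (Fin n) (Fin n) ℂ)
    (hφ : ∀ A, A.PosSemidef → (φ A).PosSemidef) (hunital : φ 1 = 1)
    (y : ℝ) (hy : y ∈ Set.Icc m M) :
    Loewner ((f y : ℝ) • (1 : Matrix (Fin n) (Fin n) ℂ) +
        (k y : ℝ) • (φ x - (y : ℝ) • (1 : Matrix (Fin n) (Fin n) ℂ)))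
      (φ (fc f x)) :=
  stmt_1_general m M f k hk x hx hspec φ hφ hunital y hy
end

section
/- Let A₁, ..., Aₙ be positive semidefinite matrices on ℂ^d with spectra in [m, M], 0 < m < M, and let x₁, ..., xₙ ∈ ℂ^d be vectors with ∑ᵢ ‖xᵢ‖² = 1. Then for p ≥ 1, q ≥ 1, and λ ≥ 0: (∑ᵢ ⟨Aᵢᵖ xᵢ, xᵢ⟩)^{1/q} − λ ∑ᵢ ⟨Aᵢ xᵢ, xᵢ⟩ ≤ max_{m ≤ z ≤ M} ((α_p z + β_p)^{1/q} − λ z), where α_p = (Mᵖ − mᵖ)/(M − m) and β_p = (M mᵖ − m Mᵖ)/(M − m). -/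
open Matrix
open scoped ComplexOrder Classical

/-!
Write `⟨Aᵢ xᵢ, xᵢ⟩ = ∑ⱼ λᵢⱼ wᵢⱼ` and `⟨Aᵢᵖ xᵢ, xᵢ⟩ = ∑ⱼ λᵢⱼᵖ wᵢⱼ`, where `λᵢⱼ ∈ [m, M]` are the
eigenvalues of `Aᵢ` and `wᵢⱼ = |⟨xᵢ, uᵢⱼ⟩|²` the squared coordinates of `xᵢ` in an orthonormal
eigenbasis. The weights `wᵢⱼ` are nonnegative and sum to `∑ᵢ ‖xᵢ‖² = 1`, so `z = ∑ λᵢⱼ wᵢⱼ` lies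
in `[m, M]`, and bounding `λᵖ` by the chord of the convex function `t ↦ tᵖ` over `[m, M]` gives
`∑ᵢ ⟨Aᵢᵖ xᵢ, xᵢ⟩ ≤ α_p z + β_p`. Monotonicity of `t ↦ t^{1/q}` then bounds the left-hand side by
the value at `z` of the function being maximised.
-/

open Finset Set

/-- The line through `(m, f m)` and `(M, f M)`, evaluated at `t`. -/
noncomputable def chord (f : ℝ → ℝ) (m M t : ℝ) : ℝ :=
  (f M - f m) / (M - m) * t + (M * f m - m * f M) / (M - m)

lemma ConvexOn.le_chord_s8 {f : ℝ → ℝ} {m M t : ℝ} (hf : ConvexOn ℝ (Icc m M) f) (hmM : m < M)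
    (ht : t ∈ Icc m M) : f t ≤ chord f m M t := by
  have hMm : 0 < M - m := sub_pos.2 hmM
  have hconv := hf.2 (left_mem_Icc.2 hmM.le) (right_mem_Icc.2 hmM.le)
    (div_nonneg (sub_nonneg.2 ht.2) hMm.le) (div_nonneg (sub_nonneg.2 ht.1) hMm.le)
    (by field_simp; ring)
  have ht_eq : ((M - t) / (M - m)) • m + ((t - m) / (M - m)) • M = t := by
    simp only [smul_eq_mul]; field_simp; ring
  rw [ht_eq] at hconv
  refine hconv.trans_eq ?_
  simp only [chord, smul_eq_mul]
  field_simp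
  ring

/-- An affine function commutes with convex combinations, so the chord bound averages. -/
lemma ConvexOn.sum_mul_le_chord {ι : Type*} (s : Finset ι) {f : ℝ → ℝ} {m M : ℝ}
    (hf : ConvexOn ℝ (Icc m M) f) (hmM : m < M) {w μ : ι → ℝ} (hw₀ : ∀ i ∈ s, 0 ≤ w i)
    (hw₁ : ∑ i ∈ s, w i = 1) (hμ : ∀ i ∈ s, μ i ∈ Icc m M) :
    ∑ i ∈ s, w i * f (μ i) ≤ chord f m M (∑ i ∈ s, w i * μ i) :=
  calc ∑ i ∈ s, w i * f (μ i) ≤ ∑ i ∈ s, w i * chord f m M (μ i) :=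
        sum_le_sum fun i hi => mul_le_mul_of_nonneg_left (hf.le_chord_s8 hmM (hμ i hi)) (hw₀ i hi)
    _ = chord f m M (∑ i ∈ s, w i * μ i) := by
        simp only [chord, mul_add, Finset.sum_add_distrib, ← Finset.sum_mul, hw₁, one_mul,
          Finset.mul_sum, mul_left_comm (w _)]

namespace Matrix.IsHermitian

variable {n : ℕ} {A : Matrix (Fin n) (Fin n) ℂ}

/-- `spectralWeight hA x j = |⟨x, uⱼ⟩|²` for the `j`-th vector `uⱼ` of the eigenbasis of `A`. -/
noncomputable def spectralWeight (hA : A.IsHermitian) (x : Fin n → ℂ) (j : Fin n) : ℝ :=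
  ‖(star (hA.eigenvectorUnitary : Matrix (Fin n) (Fin n) ℂ) *ᵥ x) j‖ ^ 2

lemma spectralWeight_nonneg (hA : A.IsHermitian) (x : Fin n → ℂ) (j : Fin n) :
    0 ≤ hA.spectralWeight x j :=
  sq_nonneg _

lemma re_dotProduct_fc_mulVec (hA : A.IsHermitian) (f : ℝ → ℝ) (x : Fin n → ℂ) :
    (star x ⬝ᵥ fc f A *ᵥ x).re = ∑ j, f (hA.eigenvalues j) * hA.spectralWeight x j := by
  set U := (hA.eigenvectorUnitary : Matrix (Fin n) (Fin n) ℂ)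
  set c := star U *ᵥ x with hc
  have hconj : star x ⬝ᵥ fc f A *ᵥ x =
      star c ⬝ᵥ diagonal (fun j => (f (hA.eigenvalues j) : ℂ)) *ᵥ c := by
    rw [fc, dif_pos hA, ← mulVec_mulVec, ← mulVec_mulVec, dotProduct_mulVec, hc, star_mulVec,
      star_eq_conjTranspose, conjTranspose_conjTranspose]
  rw [hconj]
  simp only [dotProduct, mulVec_diagonal, Complex.re_sum, Pi.star_apply, spectralWeight]
  refine sum_congr rfl fun j _ => ?_
  rw [← hc, RCLike.star_def, mul_left_comm, Complex.conj_mul', ← Complex.ofReal_pow,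
    ← Complex.ofReal_mul, Complex.ofReal_re]

lemma fc_id (hA : A.IsHermitian) : fc id A = A := by
  rw [fc, dif_pos hA]
  exact hA.spectral_theorem.symm

lemma fc_one (hA : A.IsHermitian) : fc (fun _ => 1) A = 1 := by
  rw [fc, dif_pos hA]
  simp only [Complex.ofReal_one, diagonal_one, mul_one]
  exact mem_unitaryGroup_iff.mp hA.eigenvectorUnitary.2

lemma re_dotProduct_mulVec (hA : A.IsHermitian) (x : Fin n → ℂ) :
    (star x ⬝ᵥ A *ᵥ x).re = ∑ j, hA.eigenvalues j * hA.spectralWeight x j := by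
  simpa only [hA.fc_id, id] using hA.re_dotProduct_fc_mulVec id x

lemma re_dotProduct_self (hA : A.IsHermitian) (x : Fin n → ℂ) :
    (star x ⬝ᵥ x).re = ∑ j, hA.spectralWeight x j := by
  simpa only [hA.fc_one, one_mulVec, one_mul] using hA.re_dotProduct_fc_mulVec (fun _ => 1) x

end Matrix.IsHermitian

lemma le_sSup_image_Icc {φ : ℝ → ℝ} {m M z : ℝ} (hφ : ContinuousOn φ (Icc m M))
    (hz : z ∈ Icc m M) : φ z ≤ sSup (φ '' Icc m M) :=
  le_csSup (isCompact_Icc.bddAbove_image hφ) (mem_image_of_mem φ hz)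

theorem stmt_8_general {d N : ℕ} (m M p q lam : ℝ) (hm : 0 < m) (hmM : m < M)
    (hp : 1 ≤ p) (hq : 1 ≤ q)
    (A : Fin N → Matrix (Fin d) (Fin d) ℂ) (hA : ∀ i, (A i).PosSemidef)
    (hspec : ∀ i j, ((hA i).1).eigenvalues j ∈ Set.Icc m M)
    (x : Fin N → (Fin d → ℂ)) (hx : ∑ i, (star (x i) ⬝ᵥ x i).re = 1) :
    (∑ i, (star (x i) ⬝ᵥ (fc (fun t => t ^ p) (A i)) *ᵥ x i).re) ^ ((1 : ℝ) / q) -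
        lam * ∑ i, (star (x i) ⬝ᵥ (A i) *ᵥ x i).re ≤
      sSup ((fun z => (((M ^ p - m ^ p) / (M - m)) * z +
          (M * m ^ p - m * M ^ p) / (M - m)) ^ ((1 : ℝ) / q) - lam * z) ''
        Set.Icc m M) := by
  set w : Fin N × Fin d → ℝ := fun k => (hA k.1).1.spectralWeight (x k.1) k.2
  set μ : Fin N × Fin d → ℝ := fun k => (hA k.1).1.eigenvalues k.2
  have hw₀ : ∀ k ∈ Finset.univ, 0 ≤ w k := fun k _ => (hA k.1).1.spectralWeight_nonneg _ _
  have hw₁ : ∑ k, w k = 1 := by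
    simp only [w, Fintype.sum_prod_type, ← (hA _).1.re_dotProduct_self, hx]
  have hμ : ∀ k ∈ Finset.univ, μ k ∈ Icc m M := fun k _ => hspec k.1 k.2
  have hpow : ∑ i, (star (x i) ⬝ᵥ fc (fun t => t ^ p) (A i) *ᵥ x i).re = ∑ k, w k * μ k ^ p := by
    simp only [w, μ, Fintype.sum_prod_type, (hA _).1.re_dotProduct_fc_mulVec, mul_comm]
  have hlin : ∑ i, (star (x i) ⬝ᵥ A i *ᵥ x i).re = ∑ k, w k * μ k := by
    simp only [w, μ, Fintype.sum_prod_type, (hA _).1.re_dotProduct_mulVec, mul_comm]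
  have hconvex : ConvexOn ℝ (Icc m M) (fun t : ℝ => t ^ p) :=
    (convexOn_rpow hp).subset (Icc_subset_Ici_self.trans (Ici_subset_Ici.2 hm.le)) (convex_Icc m M)
  have hz : ∑ k, w k * μ k ∈ Icc m M := (convex_Icc m M).sum_mem hw₀ hw₁ hμ
  have hq₀ : 0 ≤ (1 : ℝ) / q := by positivity
  rw [hpow, hlin]
  refine le_trans ?_ (le_sSup_image_Icc ?_ hz)
  · gcongr
    · exact sum_nonneg fun k _ => mul_nonneg (hw₀ k (mem_univ k)) (Real.rpow_nonneg (hm.le.trans (hμ k (mem_univ k)).1) p)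
    · exact hconvex.sum_mul_le_chord Finset.univ hmM hw₀ hw₁ hμ
  · exact (ContinuousOn.rpow_const (by fun_prop) fun _ _ => Or.inr hq₀).sub (by fun_prop)

theorem stmt_8 {d N : ℕ} (m M p q lam : ℝ) (hm : 0 < m) (hmM : m < M)
    (hp : 1 ≤ p) (hq : 1 ≤ q) (hlam : 0 ≤ lam)
    (A : Fin N → Matrix (Fin d) (Fin d) ℂ) (hA : ∀ i, (A i).PosSemidef)
    (hspec : ∀ i j, ((hA i).1).eigenvalues j ∈ Set.Icc m M)
    (x : Fin N → (Fin d → ℂ)) (hx : ∑ i, (star (x i) ⬝ᵥ x i).re = 1) :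
    (∑ i, (star (x i) ⬝ᵥ (fc (fun t => t ^ p) (A i)) *ᵥ x i).re) ^ ((1 : ℝ) / q) -
        lam * ∑ i, (star (x i) ⬝ᵥ (A i) *ᵥ x i).re ≤
      sSup ((fun z => (((M ^ p - m ^ p) / (M - m)) * z +
          (M * m ^ p - m * M ^ p) / (M - m)) ^ ((1 : ℝ) / q) - lam * z) ''
        Set.Icc m M) :=
  stmt_8_general m M p q lam hm hmM hp hq A hA hspec x hx
end
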